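/- Let I be an ideal of R{x̄}_{D*} with characteristic set 𝒞. Then for every c ∈ 𝒞, the initial I_c does not belong to I. -/

import Mathlib

open MvPolynomial
open scoped BigOperators

/-- The variables `dᶿxⱼ` of the `D*`-polynomial ring in `n` indeterminates with `M`
operators: a pair (index of `x`, multi-exponent `θ ∈ ℕ^M`). -/
abbrev DVar (n M : ℕ) : Type := Fin n × (Fin M → ℕ)

/-- Applying the composite operator with multi-exponent `φ` to a variable. -/
def shiftVar {n M : ℕ} (u : DVar n M) (φ : Fin M → ℕ) : DVar n M :=
  (u.1, fun l => u.2 l + φ l)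

/-- `φ` encodes a composition of the associated endomorphisms only (a `σ`-transform). -/
def IsSigmaExp {M : ℕ} (σset : Finset (Fin M)) (φ : Fin M → ℕ) : Prop :=
  ∀ k, φ k ≠ 0 → k ∈ σset

/-- `φ` encodes a composition of operators involving at least one derivation-type
operator (a `δ`-transform). -/
def IsDeltaExp {M : ℕ} (σset : Finset (Fin M)) (φ : Fin M → ℕ) : Prop :=
  ∃ k, k ∉ σset ∧ φ k ≠ 0

/-- `u` is the leader of `f`: the highest-ranked variable occurring in `f`. -/
def IsLeader {R : Type} [CommRing R] {n M : ℕ} (lt : DVar n M → DVar n M → Prop)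
    (f : MvPolynomial (DVar n M) R) (u : DVar n M) : Prop :=
  u ∈ f.vars ∧ ∀ v ∈ f.vars, v ≠ u → lt v u

/-- `f` lies in (the image of) `R`, i.e. is a constant polynomial. -/
def IsConst {R : Type} [CommRing R] {n M : ℕ} (f : MvPolynomial (DVar n M) R) : Prop :=
  ∃ r : R, f = C r

/-- `g` is reduced with respect to `f`: `g` contains no `δ`-transform of the leader of
`f`, and every `σ`-transform of the leader of `f` occurs in `g` with degree `< deg f`. -/
def ReducedWrt {R : Type} [CommRing R] {n M : ℕ} (lt : DVar n M → DVar n M → Prop)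
    (σset : Finset (Fin M)) (g f : MvPolynomial (DVar n M) R) : Prop :=
  ∀ u : DVar n M, IsLeader lt f u →
    (∀ φ : Fin M → ℕ, IsDeltaExp σset φ → shiftVar u φ ∉ g.vars) ∧
    (∀ φ : Fin M → ℕ, IsSigmaExp σset φ →
      degreeOf (shiftVar u φ) g < degreeOf u f)

/-- `g` is reduced with respect to every element of `A`. -/
def ReducedWrtSet {R : Type} [CommRing R] {n M : ℕ} (lt : DVar n M → DVar n M → Prop)
    (σset : Finset (Fin M)) (g : MvPolynomial (DVar n M) R)
    (A : Set (MvPolynomial (DVar n M) R)) : Prop :=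
  ∀ f ∈ A, ReducedWrt lt σset g f

/-- `A` is autoreduced: no element is constant and any two distinct elements are reduced
with respect to each other. -/
def Autoreduced {R : Type} [CommRing R] {n M : ℕ} (lt : DVar n M → DVar n M → Prop)
    (σset : Finset (Fin M)) (A : Set (MvPolynomial (DVar n M) R)) : Prop :=
  (∀ f ∈ A, ¬ IsConst f) ∧
  ∀ f ∈ A, ∀ g ∈ A, f ≠ g → ReducedWrt lt σset g f

/-- `rk f < rk g`: the leader of `f` is below that of `g`, or they coincide and the
leading degree of `f` is smaller. -/
def RkLt {R : Type} [CommRing R] {n M : ℕ} (lt : DVar n M → DVar n M → Prop)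
    (f g : MvPolynomial (DVar n M) R) : Prop :=
  ∃ uf ug, IsLeader lt f uf ∧ IsLeader lt g ug ∧
    (lt uf ug ∨ (uf = ug ∧ degreeOf uf f < degreeOf ug g))

/-- `rk f = rk g`: same leader and same leading degree. -/
def RkEq {R : Type} [CommRing R] {n M : ℕ} (lt : DVar n M → DVar n M → Prop)
    (f g : MvPolynomial (DVar n M) R) : Prop :=
  ∃ uf ug, IsLeader lt f uf ∧ IsLeader lt g ug ∧ uf = ug ∧
    degreeOf uf f = degreeOf ug g

/-- `rk f ≤ rk g` (with constants of lowest rank). -/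
def RkLe {R : Type} [CommRing R] {n M : ℕ} (lt : DVar n M → DVar n M → Prop)
    (f g : MvPolynomial (DVar n M) R) : Prop :=
  IsConst f ∨ RkLt lt f g ∨ RkEq lt f g

/-- `lt` is a ranking of the variables, with `σ`-operators `σset` and operator ranks `ν`. -/
structure IsRanking {n M : ℕ} (lt : DVar n M → DVar n M → Prop)
    (σset : Finset (Fin M)) (ν : Fin M → ℕ) : Prop where
  trichot : ∀ u v, lt u v ∨ u = v ∨ lt v u
  irrefl : ∀ u, ¬ lt u u
  trans : ∀ u v w, lt u v → lt v w → lt u w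
  wf : WellFounded lt
  lt_op : ∀ (u : DVar n M) (k : Fin M), lt u (shiftVar u (Pi.single k 1))
  mono : ∀ (u v : DVar n M) (k : Fin M), lt u v →
    lt (shiftVar u (Pi.single k 1)) (shiftVar v (Pi.single k 1))
  op_ord : ∀ (u : DVar n M) (k k' : Fin M), ν k < ν k' →
    lt (shiftVar u (Pi.single k 1)) (shiftVar u (Pi.single k' 1))
  nu_sigma : ∀ k ∈ σset, ν k = 0

/-- Lexicographic comparison of two rank-sorted lists of `D*`-polynomials. -/
def PrecList {R : Type} [CommRing R] {n M : ℕ} (lt : DVar n M → DVar n M → Prop)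
    (la lb : List (MvPolynomial (DVar n M) R)) : Prop :=
  (∃ i : ℕ, i < la.length ∧ i < lb.length ∧
      RkLt lt (la.getD i 0) (lb.getD i 0) ∧
      ∀ j < i, RkEq lt (la.getD j 0) (lb.getD j 0)) ∨
  (lb.length < la.length ∧ ∀ i < lb.length, RkEq lt (la.getD i 0) (lb.getD i 0))

/-- The pre-order `A ≺ B` on autoreduced (finite) sets of `D*`-polynomials. -/
def Prec {R : Type} [CommRing R] {n M : ℕ} (lt : DVar n M → DVar n M → Prop)
    (A B : Finset (MvPolynomial (DVar n M) R)) : Prop :=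
  ∃ la lb : List (MvPolynomial (DVar n M) R),
    la.Nodup ∧ lb.Nodup ∧ (∀ f, f ∈ la ↔ f ∈ A) ∧ (∀ f, f ∈ lb ↔ f ∈ B) ∧
    la.Pairwise (RkLt lt) ∧ lb.Pairwise (RkLt lt) ∧ PrecList lt la lb

/-- The initial of `f` with respect to the variable `u`: the leading coefficient of `f`
viewed as a univariate polynomial in `u`. -/
noncomputable def initialOf {R : Type} [CommRing R] {n M : ℕ} (u : DVar n M)
    (f : MvPolynomial (DVar n M) R) : MvPolynomial (DVar n M) R :=
  ∑ d ∈ f.support.filter (fun d => d u = degreeOf u f),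
    monomial (d.erase u) (coeff d f)

/-- `𝒞` is a characteristic set of the ideal `I`: a minimal element (for `≺`) of the
collection of autoreduced subsets `A ⊆ I` with `s_f ∉ I` for all `f ∈ A`. -/
def IsCharSet {R : Type} [CommRing R] {n M : ℕ} (lt : DVar n M → DVar n M → Prop)
    (σset : Finset (Fin M)) (I : Ideal (MvPolynomial (DVar n M) R))
    (𝒞 : Finset (MvPolynomial (DVar n M) R)) : Prop :=
  (Autoreduced lt σset (𝒞 : Set (MvPolynomial (DVar n M) R)) ∧
    (𝒞 : Set (MvPolynomial (DVar n M) R)) ⊆ (I : Set (MvPolynomial (DVar n M) R)) ∧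
    ∀ f ∈ 𝒞, ∀ u : DVar n M, IsLeader lt f u → pderiv u f ∉ I) ∧
  ∀ B : Finset (MvPolynomial (DVar n M) R),
    Autoreduced lt σset (B : Set (MvPolynomial (DVar n M) R)) →
    (B : Set (MvPolynomial (DVar n M) R)) ⊆ (I : Set (MvPolynomial (DVar n M) R)) →
    (∀ f ∈ B, ∀ u : DVar n M, IsLeader lt f u → pderiv u f ∉ I) →
    ¬ Prec lt B 𝒞

/-!
Suppose `c ∈ 𝒞` has leader `u`, degree `d` in `u`, and initial `I_c ∈ I`. The reductum
`c - I_c u^d` then lies in `I`, and its separant differs from `s_c` by a multiple of `I_c`, so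
it is not in `I`; in particular `u` still occurs, so the reductum has leader `u` but lower
degree `< d`. It is therefore reduced with respect to `𝒞`, and replacing the elements of `𝒞`
of rank `≥` its rank by the reductum gives an autoreduced subset of `I` with separants outside
`I` that precedes `𝒞`, contradicting minimality.
-/

section Order

variable {α : Type*} {r : α → α → Prop} [IsStrictOrder α r]

theorem Finset.exists_forall_ne_rel_of_total {s : Finset α} (hs : s.Nonempty)
    (htot : ∀ a ∈ s, ∀ b ∈ s, a ≠ b → r a b ∨ r b a) :
    ∃ m ∈ s, ∀ b ∈ s, b ≠ m → r m b := by
  obtain ⟨a, ha⟩ := hs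
  obtain ⟨⟨m, hm⟩, -, hmin⟩ :=
    (s.finite_toSet.wellFoundedOn (r := r)).has_min Set.univ ⟨⟨a, ha⟩, trivial⟩
  exact ⟨m, hm, fun b hb hbm =>
    (htot m hm b hb (Ne.symm hbm)).resolve_right (hmin ⟨b, hb⟩ trivial)⟩

theorem Finset.exists_list_pairwise_of_total (s : Finset α)
    (htot : ∀ a ∈ s, ∀ b ∈ s, a ≠ b → r a b ∨ r b a) :
    ∃ l : List α, (∀ a, a ∈ l ↔ a ∈ s) ∧ l.Pairwise r := by
  classical
  induction s using Finset.strongInduction with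
  | H s ih =>
    rcases s.eq_empty_or_nonempty with rfl | hs
    · exact ⟨[], by simp, List.Pairwise.nil⟩
    obtain ⟨m, hm, hmin⟩ := s.exists_forall_ne_rel_of_total hs htot
    obtain ⟨l, hl, hsorted⟩ := ih (s.erase m) (Finset.erase_ssubset hm)
      fun a ha b hb => htot a (Finset.mem_of_mem_erase ha) b (Finset.mem_of_mem_erase hb)
    refine ⟨m :: l, fun a => ?_, List.pairwise_cons.2 ⟨fun b hb => ?_, hsorted⟩⟩
    · rw [List.mem_cons, hl, Finset.mem_erase]
      by_cases ham : a = m <;> simp [ham, hm]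
    · obtain ⟨hbm, hb⟩ := Finset.mem_erase.1 ((hl b).1 hb)
      exact hmin b hb hbm

end Order

section Degrees

variable {σ R : Type*} [CommSemiring R] {p q : MvPolynomial σ R} {i : σ}

theorem MvPolynomial.degreeOf_eq_zero_of_notMem_vars (h : i ∉ p.vars) : degreeOf i p = 0 :=
  not_not.1 (mt mem_vars_iff_degreeOf_ne_zero.2 h)

theorem MvPolynomial.vars_subset_of_support_subset (h : p.support ⊆ q.support) :
    p.vars ⊆ q.vars := fun i hi => by
  obtain ⟨d, hd, hid⟩ := (mem_vars_iff_mem_support i).1 hi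
  exact (mem_vars_iff_mem_support i).2 ⟨d, h hd, hid⟩

theorem MvPolynomial.degreeOf_le_of_support_subset (h : p.support ⊆ q.support) :
    degreeOf i p ≤ degreeOf i q :=
  degreeOf_le_iff.2 fun _ hm => monomial_le_degreeOf i (h hm)

end Degrees

section Ranking

variable {n M : ℕ} {lt : DVar n M → DVar n M → Prop} {σset : Finset (Fin M)}
  {ν : Fin M → ℕ}

@[simp]
theorem shiftVar_zero (u : DVar n M) : shiftVar u 0 = u := by
  simp [shiftVar]

theorem shiftVar_shiftVar (u : DVar n M) (φ ψ : Fin M → ℕ) :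
    shiftVar (shiftVar u φ) ψ = shiftVar u (φ + ψ) := by
  simp [shiftVar, add_assoc]

theorem IsRanking.isStrictOrder (hrank : IsRanking lt σset ν) : IsStrictOrder (DVar n M) lt :=
  { irrefl := hrank.irrefl, trans := hrank.trans }

theorem IsRanking.lt_shiftVar (hrank : IsRanking lt σset ν) {φ : Fin M → ℕ} (hφ : φ ≠ 0)
    (u : DVar n M) : lt u (shiftVar u φ) := by
  let P : (Fin M → ℕ) → Prop := fun φ => φ = 0 ∨ ∀ u, lt u (shiftVar u φ)
  have hadd : ∀ φ ψ, P φ → P ψ → P (φ + ψ) := by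
    rintro φ ψ (rfl | hφ) (rfl | hψ)
    · exact Or.inl (add_zero 0)
    · exact Or.inr (by rwa [zero_add])
    · exact Or.inr (by rwa [add_zero])
    · refine Or.inr fun u => ?_
      rw [← shiftVar_shiftVar]
      exact hrank.trans _ _ _ (hφ u) (hψ _)
  have hsingle : ∀ k m, P (Pi.single k m) := by
    intro k m
    induction m with
    | zero => exact Or.inl (Pi.single_zero k)
    | succ m ih =>
      rw [Pi.single_add]
      exact hadd _ _ ih (Or.inr fun u => hrank.lt_op u k)
  have hP : P φ := by
    rw [← Finset.univ_sum_single φ]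
    exact Finset.sum_induction _ P hadd (Or.inl rfl) fun k _ => hsingle k (φ k)
  exact hP.resolve_left hφ u

end Ranking

section Leaders

variable {R : Type} [CommRing R] {n M : ℕ} {lt : DVar n M → DVar n M → Prop}
  {σset : Finset (Fin M)} {ν : Fin M → ℕ} {f g : MvPolynomial (DVar n M) R} {u v : DVar n M}

theorem IsLeader.unique (hrank : IsRanking lt σset ν) (hu : IsLeader lt f u)
    (hv : IsLeader lt f v) : u = v := by
  by_contra hne
  exact hrank.irrefl u (hrank.trans _ _ _ (hv.2 u hu.1 hne) (hu.2 v hv.1 (Ne.symm hne)))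

theorem IsLeader.notMem_vars_of_lt (hrank : IsRanking lt σset ν) (hu : IsLeader lt f u)
    {w : DVar n M} (huw : lt u w) : w ∉ f.vars := by
  intro hw
  by_cases hwu : w = u
  · exact hrank.irrefl u (hwu ▸ huw)
  · exact hrank.irrefl u (hrank.trans _ _ _ huw (hu.2 w hw hwu))

theorem IsLeader.shiftVar_notMem_vars (hrank : IsRanking lt σset ν) (hu : IsLeader lt f u)
    {φ : Fin M → ℕ} (hφ : φ ≠ 0) : shiftVar u φ ∉ f.vars :=
  hu.notMem_vars_of_lt hrank (hrank.lt_shiftVar hφ u)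

theorem IsLeader.degreeOf_pos (hu : IsLeader lt f u) : 0 < degreeOf u f :=
  Nat.pos_of_ne_zero (mem_vars_iff_degreeOf_ne_zero.1 hu.1)

theorem IsRanking.exists_isLeader (hrank : IsRanking lt σset ν) (hf : ¬ IsConst f) :
    ∃ u, IsLeader lt f u := by
  have hvars : f.vars.Nonempty := by
    rw [Finset.nonempty_iff_ne_empty]
    exact fun h => hf ⟨_, vars_eq_empty_iff_eq_C.1 h⟩
  have := hrank.isStrictOrder
  obtain ⟨u, hu, hmax⟩ := Finset.exists_forall_ne_rel_of_total (r := Function.swap lt) hvars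
    fun a _ b _ hab => (hrank.trichot b a).imp_right (Or.resolve_left · (Ne.symm hab))
  exact ⟨u, hu, hmax⟩

theorem IsRanking.rkLt_irrefl (hrank : IsRanking lt σset ν) (f : MvPolynomial (DVar n M) R) :
    ¬ RkLt lt f f := by
  rintro ⟨u, v, hu, hv, h | ⟨-, h⟩⟩
  · exact hrank.irrefl v (hu.unique hrank hv ▸ h)
  · exact (hu.unique hrank hv ▸ h).false

theorem IsRanking.rkLt_trans (hrank : IsRanking lt σset ν) {f g h : MvPolynomial (DVar n M) R}
    (hfg : RkLt lt f g) (hgh : RkLt lt g h) : RkLt lt f h := by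
  obtain ⟨uf, ug, hf, hg, h₁⟩ := hfg
  obtain ⟨ug', uh, hg', hh, h₂⟩ := hgh
  obtain rfl := hg'.unique hrank hg
  refine ⟨uf, uh, hf, hh, ?_⟩
  rcases h₁ with h₁ | ⟨rfl, h₁⟩ <;> rcases h₂ with h₂ | ⟨rfl, h₂⟩
  · exact Or.inl (hrank.trans _ _ _ h₁ h₂)
  · exact Or.inl h₁
  · exact Or.inl h₂
  · exact Or.inr ⟨rfl, h₁.trans h₂⟩

theorem IsRanking.isStrictOrder_rkLt (hrank : IsRanking lt σset ν) :
    IsStrictOrder (MvPolynomial (DVar n M) R) (RkLt lt) :=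
  { irrefl := hrank.rkLt_irrefl, trans := fun _ _ _ => hrank.rkLt_trans }

theorem IsRanking.rkLt_trichotomy (hrank : IsRanking lt σset ν) (hf : IsLeader lt f u)
    (hg : IsLeader lt g v) : RkLt lt f g ∨ RkEq lt f g ∨ RkLt lt g f := by
  rcases hrank.trichot u v with h | rfl | h
  · exact Or.inl ⟨u, v, hf, hg, Or.inl h⟩
  · rcases lt_trichotomy (degreeOf u f) (degreeOf u g) with h | h | h
    · exact Or.inl ⟨u, u, hf, hg, Or.inr ⟨rfl, h⟩⟩
    · exact Or.inr (Or.inl ⟨u, u, hf, hg, rfl, h⟩)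
    · exact Or.inr (Or.inr ⟨u, u, hg, hf, Or.inr ⟨rfl, h⟩⟩)
  · exact Or.inr (Or.inr ⟨v, u, hg, hf, Or.inl h⟩)

end Leaders

section Reduced

variable {R : Type} [CommRing R] {n M : ℕ} {lt : DVar n M → DVar n M → Prop}
  {σset : Finset (Fin M)} {ν : Fin M → ℕ} {f g h : MvPolynomial (DVar n M) R} {u : DVar n M}

theorem isSigmaExp_zero : IsSigmaExp σset (0 : Fin M → ℕ) :=
  fun _ hk => absurd rfl hk

theorem IsDeltaExp.ne_zero {φ : Fin M → ℕ} (hφ : IsDeltaExp σset φ) : φ ≠ 0 := by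
  rintro rfl
  obtain ⟨_, _, hk⟩ := hφ
  exact hk rfl

theorem ReducedWrt.not_rkEq (hgf : ReducedWrt lt σset g f) : ¬ RkEq lt g f := by
  rintro ⟨u, _, -, hf, rfl, hdeg⟩
  have := (hgf u hf).2 0 isSigmaExp_zero
  rw [shiftVar_zero, hdeg] at this
  exact this.false

theorem ReducedWrt.of_support_subset (hgf : ReducedWrt lt σset g f)
    (hhg : h.support ⊆ g.support) : ReducedWrt lt σset h f := fun u hu =>
  ⟨fun φ hφ hmem => (hgf u hu).1 φ hφ (vars_subset_of_support_subset hhg hmem),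
    fun φ hφ => (degreeOf_le_of_support_subset hhg).trans_lt ((hgf u hu).2 φ hφ)⟩

theorem reducedWrt_of_shiftVar_notMem_vars
    (hshift : ∀ u, IsLeader lt f u → ∀ φ ≠ 0, shiftVar u φ ∉ g.vars)
    (hdeg : ∀ u, IsLeader lt f u → degreeOf u g < degreeOf u f) : ReducedWrt lt σset g f := by
  intro u hu
  refine ⟨fun φ hφ => hshift u hu φ hφ.ne_zero, fun φ _ => ?_⟩
  by_cases hφ : φ = 0
  · simpa [hφ] using hdeg u hu
  · rw [degreeOf_eq_zero_of_notMem_vars (hshift u hu φ hφ)]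
    exact (Nat.zero_le _).trans_lt (hdeg u hu)

theorem IsRanking.reducedWrt_of_rkLt (hrank : IsRanking lt σset ν) (hgf : RkLt lt g f) :
    ReducedWrt lt σset g f := by
  obtain ⟨v, u, hg, hf, hvu⟩ := hgf
  have hle : v = u ∨ lt v u := hvu.elim Or.inr (fun h => Or.inl h.1)
  refine reducedWrt_of_shiftVar_notMem_vars (fun u' hu' φ hφ => ?_) (fun u' hu' => ?_)
  all_goals obtain rfl := hu'.unique hrank hf
  · refine hg.notMem_vars_of_lt hrank ?_
    rcases hle with rfl | hvu
    · exact hrank.lt_shiftVar hφ v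
    · exact hrank.trans _ _ _ hvu (hrank.lt_shiftVar hφ u')
  · rcases hvu with hvu | ⟨rfl, hdeg⟩
    · rw [degreeOf_eq_zero_of_notMem_vars (hg.notMem_vars_of_lt hrank hvu)]
      exact hf.degreeOf_pos
    · exact hdeg

end Reduced

section Autoreduced

variable {R : Type} [CommRing R] {n M : ℕ} {lt : DVar n M → DVar n M → Prop}
  {σset : Finset (Fin M)} {ν : Fin M → ℕ} {A B : Set (MvPolynomial (DVar n M) R)}
  {c g : MvPolynomial (DVar n M) R} {u : DVar n M}

theorem IsRanking.reducedWrt_of_support_subset (hrank : IsRanking lt σset ν)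
    (hu : IsLeader lt c u) (hgc : g.support ⊆ c.support)
    (hlt : degreeOf u g < degreeOf u c) : ReducedWrt lt σset g c := by
  refine reducedWrt_of_shiftVar_notMem_vars (fun u' hu' φ hφ hmem => ?_) (fun u' hu' => ?_)
  all_goals obtain rfl := hu'.unique hrank hu
  · exact hu'.shiftVar_notMem_vars hrank hφ (vars_subset_of_support_subset hgc hmem)
  · exact hlt

theorem IsRanking.reducedWrtSet_of_support_subset (hrank : IsRanking lt σset ν)
    (hA : Autoreduced lt σset A) (hc : c ∈ A) (hu : IsLeader lt c u)
    (hgc : g.support ⊆ c.support) (hlt : degreeOf u g < degreeOf u c) :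
    ReducedWrtSet lt σset g A := by
  intro f hf
  by_cases hfc : f = c
  · exact hfc ▸ hrank.reducedWrt_of_support_subset hu hgc hlt
  · exact (hA.2 f hf c hc hfc).of_support_subset hgc

theorem Autoreduced.mono (hA : Autoreduced lt σset A) (hBA : B ⊆ A) : Autoreduced lt σset B :=
  ⟨fun f hf => hA.1 f (hBA hf), fun f hf g hg => hA.2 f (hBA hf) g (hBA hg)⟩

theorem Autoreduced.insert (hA : Autoreduced lt σset A) (hg : ¬ IsConst g)
    (hgA : ReducedWrtSet lt σset g A) (hAg : ∀ f ∈ A, ReducedWrt lt σset f g) :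
    Autoreduced lt σset (insert g A) := by
  refine ⟨fun f hf => ?_, fun f hf f' hf' hff' => ?_⟩
  · rcases hf with rfl | hf
    exacts [hg, hA.1 f hf]
  · rcases hf with rfl | hf <;> rcases hf' with rfl | hf'
    exacts [absurd rfl hff', hAg f' hf', hgA f hf, hA.2 f hf f' hf' hff']

theorem Autoreduced.rkLt_or_rkLt (hrank : IsRanking lt σset ν) (hA : Autoreduced lt σset A)
    {f g : MvPolynomial (DVar n M) R} (hf : f ∈ A) (hg : g ∈ A) (hfg : f ≠ g) :
    RkLt lt f g ∨ RkLt lt g f := by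
  obtain ⟨u, hu⟩ := hrank.exists_isLeader (hA.1 f hf)
  obtain ⟨v, hv⟩ := hrank.exists_isLeader (hA.1 g hg)
  rcases hrank.rkLt_trichotomy hu hv with h | h | h
  · exact Or.inl h
  · exact absurd h (hA.2 g hg f hf (Ne.symm hfg)).not_rkEq
  · exact Or.inr h

end Autoreduced

section Prec

variable {R : Type} [CommRing R] {n M : ℕ} {lt : DVar n M → DVar n M → Prop}
  {σset : Finset (Fin M)} {ν : Fin M → ℕ}

theorem rkEq_getD_append {t l₁ l₂ : List (MvPolynomial (DVar n M) R)}
    (ht : ∀ f ∈ t, ∃ v, IsLeader lt f v) {j : ℕ} (hj : j < t.length) :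
    RkEq lt ((t ++ l₁).getD j 0) ((t ++ l₂).getD j 0) := by
  simp only [List.getD_eq_getElem?_getD, List.getElem?_append_left hj, List.getElem?_eq_getElem hj,
    Option.getD_some]
  obtain ⟨v, hv⟩ := ht _ (List.getElem_mem hj)
  exact ⟨v, v, hv, hv, rfl, rfl⟩

theorem precList_append_singleton_append_cons {t l : List (MvPolynomial (DVar n M) R)}
    {g b : MvPolynomial (DVar n M) R} (ht : ∀ f ∈ t, ∃ v, IsLeader lt f v)
    (hgb : RkLt lt g b) :
    PrecList lt (t ++ [g]) (t ++ b :: l) := by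
  refine Or.inl ⟨t.length, by simp, by simp, ?_, fun j hj => rkEq_getD_append ht hj⟩
  simpa [List.getD_eq_getElem?_getD, List.getElem?_append_right] using hgb

theorem precList_append_singleton_self {t : List (MvPolynomial (DVar n M) R)}
    {g : MvPolynomial (DVar n M) R} (ht : ∀ f ∈ t, ∃ v, IsLeader lt f v) :
    PrecList lt (t ++ [g]) t := by
  refine Or.inr ⟨by simp, fun j hj => ?_⟩
  simpa using rkEq_getD_append (l₁ := [g]) (l₂ := []) ht hj

open Classical in
theorem IsRanking.precList_takeWhile_append (hrank : IsRanking lt σset ν)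
    {A : Set (MvPolynomial (DVar n M) R)} (hA : Autoreduced lt σset A)
    {lb : List (MvPolynomial (DVar n M) R)} (hlb : ∀ f, f ∈ lb ↔ f ∈ A)
    {g : MvPolynomial (DVar n M) R} (hg : ¬ IsConst g) (hgA : ReducedWrtSet lt σset g A) :
    PrecList lt (lb.takeWhile (fun f => decide (RkLt lt f g)) ++ [g]) lb := by
  set p := fun f => decide (RkLt lt f g)
  set t := lb.takeWhile p
  have hleaders : ∀ f ∈ t, ∃ v, IsLeader lt f v := fun f hf =>
    hrank.exists_isLeader (hA.1 f ((hlb f).1 ((List.takeWhile_sublist p).subset hf)))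
  rcases hdrop : lb.dropWhile p with _ | ⟨b, l⟩
  · have hlb_eq : lb = t := by
      rw [← List.takeWhile_append_dropWhile (p := p) (l := lb), hdrop, List.append_nil]
    rw [hlb_eq]
    exact precList_append_singleton_self hleaders
  · have hlb_eq : lb = t ++ b :: l := by
      rw [← hdrop, List.takeWhile_append_dropWhile]
    have hb : b ∈ A := (hlb b).1 (hlb_eq ▸ by simp)
    have hbg : ¬ RkLt lt b g := by
      simpa [hdrop, p] using List.head_dropWhile_not p (l := lb) (by simp [hdrop])
    obtain ⟨u, hu⟩ := hrank.exists_isLeader hg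
    obtain ⟨v, hv⟩ := hrank.exists_isLeader (hA.1 b hb)
    have hgb : RkLt lt g b := by
      rcases hrank.rkLt_trichotomy hu hv with h | h | h
      exacts [h, absurd h (hgA b hb).not_rkEq, absurd h hbg]
    rw [hlb_eq]
    exact precList_append_singleton_append_cons hleaders hgb

/-- `B` consists of `g` and the elements of `A` of rank below `g`. -/
theorem IsRanking.exists_prec_of_reducedWrtSet (hrank : IsRanking lt σset ν)
    {A : Finset (MvPolynomial (DVar n M) R)}
    (hA : Autoreduced lt σset (A : Set (MvPolynomial (DVar n M) R)))
    {g : MvPolynomial (DVar n M) R} (hg : ¬ IsConst g) (hgA : ReducedWrtSet lt σset g A) :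
    ∃ B : Finset (MvPolynomial (DVar n M) R),
      (∀ f ∈ B, f = g ∨ f ∈ A) ∧ Autoreduced lt σset (B : Set (MvPolynomial (DVar n M) R)) ∧
        Prec lt B A := by
  classical
  have := hrank.isStrictOrder_rkLt (R := R)
  obtain ⟨lb, hlb, hsorted⟩ :=
    A.exists_list_pairwise_of_total fun a ha b hb => hA.rkLt_or_rkLt hrank ha hb
  set t := lb.takeWhile fun f => decide (RkLt lt f g)
  have ht : ∀ f ∈ t, f ∈ A ∧ RkLt lt f g := fun f hf =>
    ⟨(hlb f).1 ((List.takeWhile_sublist _).subset hf),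
      of_decide_eq_true (List.mem_takeWhile_imp (p := fun f => decide (RkLt lt f g)) hf)⟩
  have hla : (t ++ [g]).Pairwise (RkLt lt) := List.pairwise_append.2
    ⟨hsorted.sublist (List.takeWhile_sublist _), List.pairwise_singleton _ _,
      fun f hf g' hg' => List.mem_singleton.1 hg' ▸ (ht f hf).2⟩
  refine ⟨insert g t.toFinset, ?_, ?_, t ++ [g], lb, hla.nodup, hsorted.nodup, ?_, hlb, hla,
    hsorted, hrank.precList_takeWhile_append hA (by simpa using hlb) hg hgA⟩
  · simp only [Finset.mem_insert, List.mem_toFinset]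
    exact fun f hf => hf.imp_right fun hf => (ht f hf).1
  · rw [Finset.coe_insert, List.coe_toFinset]
    exact (hA.mono fun f hf => (ht f hf).1).insert hg (fun f hf => hgA f (ht f hf).1)
      fun f hf => hrank.reducedWrt_of_rkLt (ht f hf).2
  · simp [or_comm]

end Prec

section Reductum

variable {R : Type} [CommRing R] {n M : ℕ} (u : DVar n M) (c : MvPolynomial (DVar n M) R)

noncomputable def reductum : MvPolynomial (DVar n M) R :=
  c - initialOf u c * X u ^ degreeOf u c

theorem initialOf_mul_X_pow : initialOf u c * X u ^ degreeOf u c =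
    ∑ m ∈ c.support.filter (fun m => m u = degreeOf u c), monomial m (coeff m c) := by
  rw [initialOf, Finset.sum_mul]
  refine Finset.sum_congr rfl fun m hm => ?_
  rw [X_pow_eq_monomial, monomial_mul, mul_one, ← (Finset.mem_filter.1 hm).2,
    Finsupp.erase_add_single]

theorem coeff_reductum (m : DVar n M →₀ ℕ) :
    coeff m (reductum u c) = if m u = degreeOf u c then 0 else coeff m c := by
  classical
  rw [reductum, coeff_sub, initialOf_mul_X_pow, coeff_sum]
  simp only [coeff_monomial, Finset.sum_ite_eq', Finset.mem_filter, mem_support_iff]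
  by_cases h : m u = degreeOf u c <;> by_cases hm : coeff m c = 0 <;> simp [h, hm]

theorem support_reductum_subset : (reductum u c).support ⊆ c.support := by
  intro m hm
  rw [mem_support_iff, coeff_reductum] at hm
  rw [mem_support_iff]
  split_ifs at hm
  exacts [absurd rfl hm, hm]

theorem degreeOf_reductum_lt (hd : 0 < degreeOf u c) :
    degreeOf u (reductum u c) < degreeOf u c := by
  refine (degreeOf_lt_iff hd).2 fun m hm => lt_of_le_of_ne
    (monomial_le_degreeOf u (support_reductum_subset u c hm)) fun h => ?_
  rw [mem_support_iff, coeff_reductum, if_pos h] at hm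
  exact hm rfl

theorem pderiv_initialOf : pderiv u (initialOf u c) = 0 := by
  refine pderiv_eq_zero_of_notMem_vars fun h => ?_
  obtain ⟨m, hm, hum⟩ := (mem_vars_iff_mem_support u).1 h
  refine mem_support_iff.1 hm ?_
  rw [initialOf, coeff_sum]
  refine Finset.sum_eq_zero fun m' _ => ?_
  rw [coeff_monomial, if_neg]
  rintro rfl
  simp at hum

variable {u c} {I : Ideal (MvPolynomial (DVar n M) R)}

theorem reductum_mem (hc : c ∈ I) (hI : initialOf u c ∈ I) : reductum u c ∈ I :=
  I.sub_mem hc (I.mul_mem_right _ hI)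

theorem pderiv_mem_of_pderiv_reductum_mem (hI : initialOf u c ∈ I)
    (h : pderiv u (reductum u c) ∈ I) : pderiv u c ∈ I := by
  have : pderiv u c =
      pderiv u (reductum u c) + initialOf u c * pderiv u (X u ^ degreeOf u c) := by
    rw [reductum, map_sub, Derivation.leibniz, pderiv_initialOf, smul_zero, add_zero, smul_eq_mul]
    ring
  rw [this]
  exact I.add_mem h (I.mul_mem_right _ hI)

end Reductum

/-- If `𝒞` is a characteristic set of an ideal `I` of the
`D*`-polynomial ring, then the initial of every element of `𝒞` lies outside `I`. -/
theorem initial_not_mem_of_charSet {R : Type} [CommRing R] {n M : ℕ}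
    (lt : DVar n M → DVar n M → Prop) (σset : Finset (Fin M)) (ν : Fin M → ℕ)
    (hrank : IsRanking lt σset ν)
    (I : Ideal (MvPolynomial (DVar n M) R))
    (𝒞 : Finset (MvPolynomial (DVar n M) R))
    (h𝒞 : IsCharSet lt σset I 𝒞) :
    ∀ c ∈ 𝒞, ∀ u : DVar n M, IsLeader lt c u → initialOf u c ∉ I := by
  intro c hc u hu hinit
  obtain ⟨⟨hA, h𝒞I, hsep⟩, hmin⟩ := h𝒞
  have hsupp := support_reductum_subset u c
  have hsep_red : pderiv u (reductum u c) ∉ I :=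
    fun h => hsep c hc u hu (pderiv_mem_of_pderiv_reductum_mem hinit h)
  have hu_red : u ∈ (reductum u c).vars := by
    by_contra h
    exact hsep_red (by simp [pderiv_eq_zero_of_notMem_vars h])
  have hlead : IsLeader lt (reductum u c) u :=
    ⟨hu_red, fun v hv => hu.2 v (vars_subset_of_support_subset hsupp hv)⟩
  have hnc : ¬ IsConst (reductum u c) := by
    rintro ⟨r, hr⟩
    simp [hr] at hu_red
  have hred : ReducedWrtSet lt σset (reductum u c) 𝒞 := hrank.reducedWrtSet_of_support_subset
    hA hc hu hsupp (degreeOf_reductum_lt u c hu.degreeOf_pos)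
  obtain ⟨B, hB𝒞, hB, hprec⟩ := hrank.exists_prec_of_reducedWrtSet hA hnc hred
  refine hmin B hB (fun f hf => ?_) (fun f hf v hv => ?_) hprec
  · rcases hB𝒞 f hf with rfl | hf
    exacts [reductum_mem (h𝒞I hc) hinit, h𝒞I hf]
  · rcases hB𝒞 f hf with rfl | hf
    exacts [hv.unique hrank hlead ▸ hsep_red, hsep f hf v hv]
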